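/- Let T : Fin n → Fin n → Fin n → ℝ with n ≥ 2, with partial traces T¹, T², T³, and let F be the trace-free modification of Theorem 1.1. Then ∑_{i,j,k} (F i j k)² ≤ ∑_{i,j,k} (G i j k)² for every tensor G of the form G i j k = T i j k + x₁ T¹ᵢ δⱼₖ + x₂ T¹ⱼ δᵢₖ + x₃ T¹ₖ δᵢⱼ + y₁ T²ᵢ δⱼₖ + y₂ T²ⱼ δᵢₖ + y₃ T²ₖ δᵢⱼ + z₁ T³ᵢ δⱼₖ + z₂ T³ⱼ δᵢₖ + z₃ T³ₖ δᵢⱼ with arbitrary real coefficients x₁,…,z₃. -/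

import Mathlib

/-!
A pure-trace tensor `a i δⱼₖ + b j δᵢₖ + c k δᵢⱼ` pairs with any tensor `F` to
`∑ a · tr₁ F + ∑ b · tr₂ F + ∑ c · tr₃ F`, so the pure-trace tensors are orthogonal to the
trace-free ones. The constants in `F` are exactly those making `T` plus a pure-trace tensor
trace-free, and every competitor `G` differs from `F` by a pure-trace tensor; by Pythagoras
`‖G‖² = ‖F‖² + ‖G - F‖² ≥ ‖F‖²`.
-/

open Finset

variable {ι : Type*} [Fintype ι]

def trace₁ (T : ι → ι → ι → ℝ) (i : ι) : ℝ := ∑ l, T i l l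
def trace₂ (T : ι → ι → ι → ℝ) (i : ι) : ℝ := ∑ l, T l i l
def trace₃ (T : ι → ι → ι → ℝ) (i : ι) : ℝ := ∑ l, T l l i

theorem trace₁_add (S T : ι → ι → ι → ℝ) : trace₁ (S + T) = trace₁ S + trace₁ T := by
  funext i; simp [trace₁, sum_add_distrib]

theorem trace₂_add (S T : ι → ι → ι → ℝ) : trace₂ (S + T) = trace₂ S + trace₂ T := by
  funext i; simp [trace₂, sum_add_distrib]

theorem trace₃_add (S T : ι → ι → ι → ℝ) : trace₃ (S + T) = trace₃ S + trace₃ T := by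
  funext i; simp [trace₃, sum_add_distrib]

structure IsTraceFree (F : ι → ι → ι → ℝ) : Prop where
  trace₁_eq_zero : trace₁ F = 0
  trace₂_eq_zero : trace₂ F = 0
  trace₃_eq_zero : trace₃ F = 0

variable [DecidableEq ι]

def pureTraceTensor (a b c : ι → ℝ) (i j k : ι) : ℝ :=
  a i * (if j = k then 1 else 0) + b j * (if i = k then 1 else 0)
    + c k * (if i = j then 1 else 0)

theorem trace₁_pureTraceTensor (a b c : ι → ℝ) :
    trace₁ (pureTraceTensor a b c) = (Fintype.card ι : ℝ) • a + b + c := by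
  funext i
  simp [trace₁, pureTraceTensor, sum_add_distrib]

theorem trace₂_pureTraceTensor (a b c : ι → ℝ) :
    trace₂ (pureTraceTensor a b c) = a + (Fintype.card ι : ℝ) • b + c := by
  funext i
  simp [trace₂, pureTraceTensor, sum_add_distrib]

theorem trace₃_pureTraceTensor (a b c : ι → ℝ) :
    trace₃ (pureTraceTensor a b c) = a + b + (Fintype.card ι : ℝ) • c := by
  funext i
  simp [trace₃, pureTraceTensor, sum_add_distrib]

theorem sum_mul_pureTraceTensor (F : ι → ι → ι → ℝ) (a b c : ι → ℝ) :
    ∑ i, ∑ j, ∑ k, F i j k * pureTraceTensor a b c i j k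
      = ∑ i, a i * trace₁ F i + ∑ j, b j * trace₂ F j + ∑ k, c k * trace₃ F k := by
  simp only [pureTraceTensor, mul_add, sum_add_distrib, trace₁, trace₂, trace₃, mul_sum]
  congr 1; congr 1
  · simp [mul_ite, mul_comm]
  · rw [sum_comm]; simp [mul_ite, mul_comm]
  · calc _ = ∑ i, ∑ k, F i i k * c k :=
          sum_congr rfl fun i _ => by rw [sum_comm]; simp [mul_ite]
      _ = _ := by rw [sum_comm]; simp [mul_comm]

theorem IsTraceFree.sum_mul_pureTraceTensor_eq_zero {F : ι → ι → ι → ℝ} (hF : IsTraceFree F)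
    (a b c : ι → ℝ) : ∑ i, ∑ j, ∑ k, F i j k * pureTraceTensor a b c i j k = 0 := by
  simp [sum_mul_pureTraceTensor, hF.trace₁_eq_zero, hF.trace₂_eq_zero, hF.trace₃_eq_zero]

theorem IsTraceFree.sum_sq_le_sum_sq_add_pureTraceTensor {F : ι → ι → ι → ℝ}
    (hF : IsTraceFree F) (a b c : ι → ℝ) :
    ∑ i, ∑ j, ∑ k, F i j k ^ 2 ≤ ∑ i, ∑ j, ∑ k, (F i j k + pureTraceTensor a b c i j k) ^ 2 := by
  have hexpand : ∑ i, ∑ j, ∑ k, (F i j k + pureTraceTensor a b c i j k) ^ 2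
      = ∑ i, ∑ j, ∑ k, F i j k ^ 2
        + 2 * ∑ i, ∑ j, ∑ k, F i j k * pureTraceTensor a b c i j k
        + ∑ i, ∑ j, ∑ k, pureTraceTensor a b c i j k ^ 2 := by
    simp only [add_sq, sum_add_distrib, mul_sum, mul_assoc]
  rw [hexpand, hF.sum_mul_pureTraceTensor_eq_zero, mul_zero, add_zero]
  exact le_add_of_nonneg_right (by positivity)

noncomputable def traceFreePart (T : ι → ι → ι → ℝ) : ι → ι → ι → ℝ :=
  let m : ℝ := Fintype.card ι
  let c := (m + 1) / ((m - 1) * (m + 2))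
  let d := 1 / ((m - 1) * (m + 2))
  T + pureTraceTensor (-c • trace₁ T + d • trace₂ T + d • trace₃ T)
    (d • trace₁ T - c • trace₂ T + d • trace₃ T) (d • trace₁ T + d • trace₂ T - c • trace₃ T)

theorem isTraceFree_traceFreePart (hι : Fintype.card ι ≠ 1) (T : ι → ι → ι → ℝ) :
    IsTraceFree (traceFreePart T) := by
  have hm₁ : (Fintype.card ι : ℝ) - 1 ≠ 0 := sub_ne_zero.mpr (by exact_mod_cast hι)
  have hm₂ : (Fintype.card ι : ℝ) + 2 ≠ 0 := by positivity
  constructor <;> funext i <;>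
    simp only [traceFreePart, trace₁_add, trace₂_add, trace₃_add, trace₁_pureTraceTensor,
      trace₂_pureTraceTensor, trace₃_pureTraceTensor, Pi.add_apply, Pi.sub_apply, Pi.smul_apply,
      Pi.zero_apply, smul_eq_mul] <;>
    field_simp <;> ring

theorem sum_sq_traceFreePart_le (hι : Fintype.card ι ≠ 1) (T : ι → ι → ι → ℝ)
    (a b c : ι → ℝ) :
    ∑ i, ∑ j, ∑ k, traceFreePart T i j k ^ 2
      ≤ ∑ i, ∑ j, ∑ k, (T i j k + pureTraceTensor a b c i j k) ^ 2 := by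
  obtain ⟨a₀, b₀, c₀, hT₀⟩ :
      ∃ a₀ b₀ c₀, traceFreePart T = T + pureTraceTensor a₀ b₀ c₀ := ⟨_, _, _, rfl⟩
  have hsplit : ∀ i j k, T i j k + pureTraceTensor a b c i j k
      = traceFreePart T i j k + pureTraceTensor (a - a₀) (b - b₀) (c - c₀) i j k := by
    intro i j k
    simp only [hT₀, pureTraceTensor, Pi.add_apply, Pi.sub_apply]
    ring
  simp only [hsplit]
  exact (isTraceFree_traceFreePart hι T).sum_sq_le_sum_sq_add_pureTraceTensor _ _ _

theorem stmt2 (n : ℕ) (hn : 2 ≤ n) (T : Fin n → Fin n → Fin n → ℝ)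
    (T1 T2 T3 : Fin n → ℝ)
    (hT1 : ∀ i, T1 i = ∑ l, T i l l)
    (hT2 : ∀ i, T2 i = ∑ l, T l i l)
    (hT3 : ∀ i, T3 i = ∑ l, T l l i)
    (F : Fin n → Fin n → Fin n → ℝ)
    (hF : ∀ i j k, F i j k = T i j k
      - (((n : ℝ) + 1) / (((n : ℝ) - 1) * ((n : ℝ) + 2))) *
          (T1 i * (if j = k then (1:ℝ) else 0)
           + T2 j * (if i = k then (1:ℝ) else 0)
           + T3 k * (if i = j then (1:ℝ) else 0))
      + (1 / (((n : ℝ) - 1) * ((n : ℝ) + 2))) *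
          (T1 j * (if i = k then (1:ℝ) else 0)
           + T1 k * (if i = j then (1:ℝ) else 0)
           + T2 i * (if j = k then (1:ℝ) else 0)
           + T2 k * (if i = j then (1:ℝ) else 0)
           + T3 i * (if j = k then (1:ℝ) else 0)
           + T3 j * (if i = k then (1:ℝ) else 0))) :
    ∀ x₁ x₂ x₃ y₁ y₂ y₃ z₁ z₂ z₃ : ℝ,
      ∑ i, ∑ j, ∑ k, (F i j k) ^ 2
        ≤ ∑ i, ∑ j, ∑ k,
            (T i j k
              + x₁ * T1 i * (if j = k then (1:ℝ) else 0)
              + x₂ * T1 j * (if i = k then (1:ℝ) else 0)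
              + x₃ * T1 k * (if i = j then (1:ℝ) else 0)
              + y₁ * T2 i * (if j = k then (1:ℝ) else 0)
              + y₂ * T2 j * (if i = k then (1:ℝ) else 0)
              + y₃ * T2 k * (if i = j then (1:ℝ) else 0)
              + z₁ * T3 i * (if j = k then (1:ℝ) else 0)
              + z₂ * T3 j * (if i = k then (1:ℝ) else 0)
              + z₃ * T3 k * (if i = j then (1:ℝ) else 0)) ^ 2 := by
  intro x₁ x₂ x₃ y₁ y₂ y₃ z₁ z₂ z₃
  obtain rfl : T1 = trace₁ T := funext hT1
  obtain rfl : T2 = trace₂ T := funext hT2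
  obtain rfl : T3 = trace₃ T := funext hT3
  have hF' : F = traceFreePart T := by
    funext i j k
    simp only [hF, traceFreePart, pureTraceTensor, Fintype.card_fin, Pi.add_apply, Pi.sub_apply,
      Pi.smul_apply, smul_eq_mul]
    ring
  subst hF'
  have hcard : Fintype.card (Fin n) ≠ 1 := by rw [Fintype.card_fin]; omega
  convert sum_sq_traceFreePart_le hcard T
    (x₁ • trace₁ T + y₁ • trace₂ T + z₁ • trace₃ T)
    (x₂ • trace₁ T + y₂ • trace₂ T + z₂ • trace₃ T)
    (x₃ • trace₁ T + y₃ • trace₂ T + z₃ • trace₃ T) using 5 with i _ j _ k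
  simp only [pureTraceTensor, Pi.add_apply, Pi.smul_apply, smul_eq_mul]
  ring
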